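/- arXiv:2010.02609 — 5 statements merged into one kernel-verified Lean document; each statement's English description precedes it below -/
import Mathlib

section
/- Fix a sentence length n ≥ 1. For every valid combination of aspect sentiment triplets over a sentence of length n (i.e., a finite set of triplets whose target spans are pairwise disjoint, so that each target has exactly one associated opinion span and sentiment), the encoding procedure — which labels position i with S^ε_{a−s,b−s} if some triplet has single-word target (s,e) with s = e = i, opinion span (a,b) and sentiment ε; with B^ε_{a−s,b−s} if some triplet has target (s,e) with s = i < e, opinion span (a,b) and sentiment ε; with E if some triplet has target (s,e) with e = i > s; with I if some triplet has target (s,e) with s < i < e; and with O otherwise — is well defined (exactly one case applies at each position) and produces a tag sequence of length n that is valid under the position-aware tagging scheme. -/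
/-- A sentiment polarity: `+`, `0`, `−`. -/
inductive Sentiment : Type
  | pos | neu | neg
  deriving DecidableEq

/-- An aspect sentiment triplet: a target span `(ts, te)`, an opinion span `(os, oe)`,
and a sentiment polarity. Positions are integers. -/
structure Triplet : Type where
  ts : ℤ
  te : ℤ
  os : ℤ
  oe : ℤ
  sent : Sentiment
  deriving DecidableEq

/-- A triplet over a sentence of length `n`: both spans lie within `{1, …, n}`
(with start ≤ end). -/
def ValidTriplet (n : ℤ) (t : Triplet) : Prop :=
  1 ≤ t.ts ∧ t.ts ≤ t.te ∧ t.te ≤ n ∧ 1 ≤ t.os ∧ t.os ≤ t.oe ∧ t.oe ≤ n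

/-- A valid combination of triplets over a sentence of length `n`: a finite set of
triplets over the sentence whose target spans are pairwise disjoint. -/
def ValidCombination (n : ℤ) (C : Finset Triplet) : Prop :=
  (∀ t ∈ C, ValidTriplet n t) ∧
  ∀ t₁ ∈ C, ∀ t₂ ∈ C, t₁ ≠ t₂ → (t₁.te < t₂.ts ∨ t₂.te < t₁.ts)

/-- The position-aware tag set: `I`, `O`, `E` together with `B^ε_{j,k}` and
`S^ε_{j,k}` for each sentiment `ε` and integer offsets `j`, `k`. -/
inductive Tag : Type
  | I | O | E
  | B (ε : Sentiment) (j k : ℤ)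
  | S (ε : Sentiment) (j k : ℤ)
  deriving DecidableEq

/-- The five sub-tags of the `BIOES` scheme. -/
inductive SubTag : Type
  | B | I | O | E | S
  deriving DecidableEq

/-- The sub-tag of a position-aware tag: `B^ε_{j,k} ↦ B`, `S^ε_{j,k} ↦ S`, and
`I`, `O`, `E` map to themselves. -/
def Tag.sub : Tag → SubTag
  | .I => .I
  | .O => .O
  | .E => .E
  | .B _ _ _ => .B
  | .S _ _ _ => .S

/-- A valid tag sequence of length `n` (a tag sequence is modeled as a function
`ℤ → Tag` carrying the default tag `O` outside the sentence `{1, …, n}`):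
(i) the sub-tag sequence is a well-formed `BIOES` sequence — every position with
sub-tag `B` starts a (maximal) segment whose interior positions carry sub-tag `I`
and whose last position carries sub-tag `E`, and every position with sub-tag `I`
resp. `E` lies in the interior resp. at the end of such a segment (so `S` and `O`
occur only outside such segments); and
(ii) every tag `B^ε_{j,k}` or `S^ε_{j,k}` at a position `i` satisfies `j ≤ k`,
`1 ≤ i + j` and `i + k ≤ n`, i.e. the offsets designate a span `(i+j, i+k)`
inside the sentence. -/
def ValidTagSeq (n : ℤ) (y : ℤ → Tag) : Prop :=
  (∀ i : ℤ, i < 1 ∨ n < i → y i = Tag.O) ∧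
  (∀ i : ℤ, 1 ≤ i → i ≤ n → (y i).sub = SubTag.B →
      ∃ e, i < e ∧ e ≤ n ∧ (y e).sub = SubTag.E ∧
        ∀ m, i < m → m < e → (y m).sub = SubTag.I) ∧
  (∀ i : ℤ, 1 ≤ i → i ≤ n → (y i).sub = SubTag.I →
      ∃ s e, 1 ≤ s ∧ s < i ∧ i < e ∧ e ≤ n ∧ (y s).sub = SubTag.B ∧
        (y e).sub = SubTag.E ∧ ∀ m, s < m → m < e → (y m).sub = SubTag.I) ∧
  (∀ i : ℤ, 1 ≤ i → i ≤ n → (y i).sub = SubTag.E →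
      ∃ s, 1 ≤ s ∧ s < i ∧ (y s).sub = SubTag.B ∧
        ∀ m, s < m → m < i → (y m).sub = SubTag.I) ∧
  (∀ i : ℤ, ∀ ε : Sentiment, ∀ j k : ℤ, 1 ≤ i → i ≤ n →
      (y i = Tag.B ε j k ∨ y i = Tag.S ε j k) →
      j ≤ k ∧ 1 ≤ i + j ∧ i + k ≤ n)

/-- The encoding procedure, as a relation between a position `i` and the tag `g`
assigned to it: position `i` gets `S^ε_{a−s,b−s}` if some triplet has single-word
target `(s,e)` with `s = e = i`, opinion span `(a,b)` and sentiment `ε`;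
`B^ε_{a−s,b−s}` if some triplet has target `(s,e)` with `s = i < e`, opinion span
`(a,b)` and sentiment `ε`; `E` if some triplet has target `(s,e)` with `e = i > s`;
`I` if some triplet has target `(s,e)` with `s < i < e`; and `O` otherwise. -/
def EncodesAt (C : Finset Triplet) (i : ℤ) (g : Tag) : Prop :=
  (∃ t ∈ C, t.ts = i ∧ t.te = i ∧ g = Tag.S t.sent (t.os - t.ts) (t.oe - t.ts)) ∨
  (∃ t ∈ C, t.ts = i ∧ i < t.te ∧ g = Tag.B t.sent (t.os - t.ts) (t.oe - t.ts)) ∨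
  (∃ t ∈ C, t.te = i ∧ t.ts < i ∧ g = Tag.E) ∨
  (∃ t ∈ C, t.ts < i ∧ i < t.te ∧ g = Tag.I) ∨
  ((¬ ∃ t ∈ C, t.ts = i ∧ t.te = i) ∧ (¬ ∃ t ∈ C, t.ts = i ∧ i < t.te) ∧
   (¬ ∃ t ∈ C, t.te = i ∧ t.ts < i) ∧ (¬ ∃ t ∈ C, t.ts < i ∧ i < t.te) ∧
   g = Tag.O)

/-- `y` is the encoding of the combination `C`: at every position, the tag of `y`
is the one produced by the encoding procedure. -/
def Encodes (C : Finset Triplet) (y : ℤ → Tag) : Prop :=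
  ∀ i : ℤ, EncodesAt C i (y i)

/-- `t` is one of the triplets read off from the tag sequence `y` by the decoding
procedure: its target span `(s, e)` is a maximal `BIOES` target segment of `y`
(either a single position with an `S`-tag, or a segment starting with a `B`-tag,
ending with sub-tag `E`, with all interior sub-tags `I`), its opinion span is
`(s + j, s + k)` where `j, k` are the offsets carried by the initial tag, and its
sentiment is the `ε` carried by that same tag. -/
def DecodedTriplet (y : ℤ → Tag) (t : Triplet) : Prop :=
  (t.ts = t.te ∧ y t.ts = Tag.S t.sent (t.os - t.ts) (t.oe - t.ts)) ∨
  (t.ts < t.te ∧ y t.ts = Tag.B t.sent (t.os - t.ts) (t.oe - t.ts) ∧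
    (y t.te).sub = SubTag.E ∧ ∀ m, t.ts < m → m < t.te → (y m).sub = SubTag.I)

/-- `C` is the decoding of the tag sequence `y`: `C` consists exactly of the
triplets read off from the maximal `BIOES` target segments of `y`. -/
def DecodesTo (y : ℤ → Tag) (C : Finset Triplet) : Prop :=
  ∀ t : Triplet, t ∈ C ↔ DecodedTriplet y t

lemma encodesAt_unique {n : ℤ} {C : Finset Triplet} (hC : ValidCombination n C)
    {i : ℤ} {g₁ g₂ : Tag} (h₁ : EncodesAt C i g₁) (h₂ : EncodesAt C i g₂) : g₁ = g₂ := by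
  rcases h₁ with ⟨t,ht,a1,a2,rfl⟩|⟨t,ht,a1,a2,rfl⟩|⟨t,ht,a1,a2,rfl⟩|⟨t,ht,a1,a2,rfl⟩|⟨n1,n2,n3,n4,rfl⟩ <;>
  rcases h₂ with ⟨t',ht',b1,b2,rfl⟩|⟨t',ht',b1,b2,rfl⟩|⟨t',ht',b1,b2,rfl⟩|⟨t',ht',b1,b2,rfl⟩|⟨m1,m2,m3,m4,rfl⟩
  all_goals try rfl
  all_goals try exact absurd (⟨t, ht, a1, a2⟩ : ∃ t ∈ C, t.ts = i ∧ t.te = i) m1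
  all_goals try exact absurd (⟨t, ht, a1, a2⟩ : ∃ t ∈ C, t.ts = i ∧ i < t.te) m2
  all_goals try exact absurd (⟨t, ht, a1, a2⟩ : ∃ t ∈ C, t.te = i ∧ t.ts < i) m3
  all_goals try exact absurd (⟨t, ht, a1, a2⟩ : ∃ t ∈ C, t.ts < i ∧ i < t.te) m4
  all_goals try exact absurd (⟨t', ht', b1, b2⟩ : ∃ t ∈ C, t.ts = i ∧ t.te = i) n1
  all_goals try exact absurd (⟨t', ht', b1, b2⟩ : ∃ t ∈ C, t.ts = i ∧ i < t.te) n2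
  all_goals try exact absurd (⟨t', ht', b1, b2⟩ : ∃ t ∈ C, t.te = i ∧ t.ts < i) n3
  all_goals try exact absurd (⟨t', ht', b1, b2⟩ : ∃ t ∈ C, t.ts < i ∧ i < t.te) n4
  all_goals
    rcases eq_or_ne t t' with rfl | hne
    · first | rfl | (exfalso; omega)
    · obtain ⟨c1,c2,c3,c4,c5,c6⟩ := hC.1 t ht
      obtain ⟨d1,d2,d3,d4,d5,d6⟩ := hC.1 t' ht'
      rcases hC.2 t ht t' ht' hne with h | h <;> (exfalso; omega)

lemma encodesAt_exists (C : Finset Triplet) (i : ℤ) : ∃ g, EncodesAt C i g := by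
  classical
  by_cases h1 : ∃ t ∈ C, t.ts = i ∧ t.te = i
  · obtain ⟨t, ht, h⟩ := h1
    exact ⟨_, Or.inl ⟨t, ht, h.1, h.2, rfl⟩⟩
  by_cases h2 : ∃ t ∈ C, t.ts = i ∧ i < t.te
  · obtain ⟨t, ht, h⟩ := h2
    exact ⟨_, Or.inr (Or.inl ⟨t, ht, h.1, h.2, rfl⟩)⟩
  by_cases h3 : ∃ t ∈ C, t.te = i ∧ t.ts < i
  · obtain ⟨t, ht, h⟩ := h3
    exact ⟨Tag.E, Or.inr (Or.inr (Or.inl ⟨t, ht, h.1, h.2, rfl⟩))⟩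
  by_cases h4 : ∃ t ∈ C, t.ts < i ∧ i < t.te
  · obtain ⟨t, ht, h⟩ := h4
    exact ⟨Tag.I, Or.inr (Or.inr (Or.inr (Or.inl ⟨t, ht, h.1, h.2, rfl⟩)))⟩
  exact ⟨Tag.O, Or.inr (Or.inr (Or.inr (Or.inr ⟨h1, h2, h3, h4, rfl⟩)))⟩

lemma enc_S {n : ℤ} {C : Finset Triplet} (hC : ValidCombination n C) {t : Triplet}
    (ht : t ∈ C) {i : ℤ} (h1 : t.ts = i) (h2 : t.te = i) {g : Tag}
    (hg : EncodesAt C i g) : g = Tag.S t.sent (t.os - t.ts) (t.oe - t.ts) :=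
  encodesAt_unique hC hg (Or.inl ⟨t, ht, h1, h2, rfl⟩)

lemma enc_B {n : ℤ} {C : Finset Triplet} (hC : ValidCombination n C) {t : Triplet}
    (ht : t ∈ C) {i : ℤ} (h1 : t.ts = i) (h2 : i < t.te) {g : Tag}
    (hg : EncodesAt C i g) : g = Tag.B t.sent (t.os - t.ts) (t.oe - t.ts) :=
  encodesAt_unique hC hg (Or.inr (Or.inl ⟨t, ht, h1, h2, rfl⟩))

lemma enc_E {n : ℤ} {C : Finset Triplet} (hC : ValidCombination n C) {t : Triplet}
    (ht : t ∈ C) {i : ℤ} (h1 : t.te = i) (h2 : t.ts < i) {g : Tag}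
    (hg : EncodesAt C i g) : g = Tag.E :=
  encodesAt_unique hC hg (Or.inr (Or.inr (Or.inl ⟨t, ht, h1, h2, rfl⟩)))

lemma enc_I {n : ℤ} {C : Finset Triplet} (hC : ValidCombination n C) {t : Triplet}
    (ht : t ∈ C) {i : ℤ} (h1 : t.ts < i) (h2 : i < t.te) {g : Tag}
    (hg : EncodesAt C i g) : g = Tag.I :=
  encodesAt_unique hC hg (Or.inr (Or.inr (Or.inr (Or.inl ⟨t, ht, h1, h2, rfl⟩))))

/-- For a sentence length `n ≥ 1` and every valid combination `C` of
aspect sentiment triplets over the sentence, the encoding procedure is well defined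
(exactly one case applies — i.e. exactly one tag is produced — at each position),
it produces a unique tag sequence, and any tag sequence it produces is valid under
the position-aware tagging scheme. -/
theorem encoding_well_defined_and_valid
    (n : ℤ) (hn : 1 ≤ n) (C : Finset Triplet) (hC : ValidCombination n C) :
    (∀ i : ℤ, ∃! g : Tag, EncodesAt C i g) ∧
    (∃! y : ℤ → Tag, Encodes C y) ∧
    (∀ y : ℤ → Tag, Encodes C y → ValidTagSeq n y) := by
  have huniq : ∀ i : ℤ, ∃! g : Tag, EncodesAt C i g := by
    intro i
    obtain ⟨g, hg⟩ := encodesAt_exists C i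
    exact ⟨g, hg, fun g' hg' => encodesAt_unique hC hg' hg⟩
  refine ⟨huniq, ?_, ?_⟩
  · exact ⟨fun i => (huniq i).choose, fun i => (huniq i).choose_spec.1,
      fun y' hy' => funext fun i => (huniq i).choose_spec.2 _ (hy' i)⟩
  · intro y hy
    have hv := hC.1
    refine ⟨?_, ?_, ?_, ?_, ?_⟩
    · -- outside the sentence: O
      intro i hi
      rcases hy i with ⟨t,ht,a1,a2,hgi⟩|⟨t,ht,a1,a2,hgi⟩|⟨t,ht,a1,a2,hgi⟩|⟨t,ht,a1,a2,hgi⟩|⟨_,_,_,_,hgi⟩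
      all_goals first
        | exact hgi
        | (exfalso; obtain ⟨c1,c2,c3,_,_,_⟩ := hv t ht; omega)
    · -- sub-tag B
      intro i h1i hin hsub
      rcases hy i with ⟨t,ht,a1,a2,hgi⟩|⟨t,ht,a1,a2,hgi⟩|⟨t,ht,a1,a2,hgi⟩|⟨t,ht,a1,a2,hgi⟩|⟨_,_,_,_,hgi⟩
      all_goals try (rw [hgi] at hsub; simp [Tag.sub] at hsub)
      obtain ⟨c1,c2,c3,_,_,_⟩ := hv t ht
      refine ⟨t.te, by omega, by omega, ?_, ?_⟩
      · rw [enc_E hC ht rfl (by omega) (hy t.te)]; rfl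
      · intro m hm1 hm2
        rw [enc_I hC ht (by omega) hm2 (hy m)]; rfl
    · -- sub-tag I
      intro i h1i hin hsub
      rcases hy i with ⟨t,ht,a1,a2,hgi⟩|⟨t,ht,a1,a2,hgi⟩|⟨t,ht,a1,a2,hgi⟩|⟨t,ht,a1,a2,hgi⟩|⟨_,_,_,_,hgi⟩
      all_goals try (rw [hgi] at hsub; simp [Tag.sub] at hsub)
      obtain ⟨c1,c2,c3,_,_,_⟩ := hv t ht
      refine ⟨t.ts, t.te, by omega, by omega, by omega, by omega, ?_, ?_, ?_⟩
      · rw [enc_B hC ht rfl (by omega) (hy t.ts)]; rfl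
      · rw [enc_E hC ht rfl (by omega) (hy t.te)]; rfl
      · intro m hm1 hm2
        rw [enc_I hC ht hm1 hm2 (hy m)]; rfl
    · -- sub-tag E
      intro i h1i hin hsub
      rcases hy i with ⟨t,ht,a1,a2,hgi⟩|⟨t,ht,a1,a2,hgi⟩|⟨t,ht,a1,a2,hgi⟩|⟨t,ht,a1,a2,hgi⟩|⟨_,_,_,_,hgi⟩
      all_goals try (rw [hgi] at hsub; simp [Tag.sub] at hsub)
      obtain ⟨c1,c2,c3,_,_,_⟩ := hv t ht
      refine ⟨t.ts, by omega, by omega, ?_, ?_⟩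
      · rw [enc_B hC ht rfl (by omega) (hy t.ts)]; rfl
      · intro m hm1 hm2
        rw [enc_I hC ht hm1 (by omega) (hy m)]; rfl
    · -- offsets
      intro i ε j k h1i hin hor
      rcases hor with hB | hS
      · rcases hy i with ⟨t,ht,a1,a2,hgi⟩|⟨t,ht,a1,a2,hgi⟩|⟨t,ht,a1,a2,hgi⟩|⟨t,ht,a1,a2,hgi⟩|⟨_,_,_,_,hgi⟩
        all_goals rw [hB] at hgi
        all_goals try (exfalso; exact Tag.noConfusion hgi)
        obtain ⟨c1,c2,c3,c4,c5,c6⟩ := hv t ht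
        obtain ⟨-, hj, hk⟩ := Tag.B.inj hgi
        omega
      · rcases hy i with ⟨t,ht,a1,a2,hgi⟩|⟨t,ht,a1,a2,hgi⟩|⟨t,ht,a1,a2,hgi⟩|⟨t,ht,a1,a2,hgi⟩|⟨_,_,_,_,hgi⟩
        all_goals rw [hS] at hgi
        all_goals try (exfalso; exact Tag.noConfusion hgi)
        obtain ⟨c1,c2,c3,c4,c5,c6⟩ := hv t ht
        obtain ⟨-, hj, hk⟩ := Tag.S.inj hgi
        omega
end

section
/- Fix a sentence length n ≥ 1. The encoding map from valid combinations of aspect sentiment triplets over a sentence of length n to tag sequences of length n is injective: if two valid combinations of triplets produce the same tag sequence under the encoding procedure, then the two combinations are equal as sets of triplets. -/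
lemma overlap_eq {n : ℤ} {C : Finset Triplet} (h : ValidCombination n C)
    {t t' : Triplet} (ht : t ∈ C) (ht' : t' ∈ C) (i : ℤ)
    (h1 : t.ts ≤ i) (h2 : i ≤ t.te) (h3 : t'.ts ≤ i) (h4 : i ≤ t'.te) : t = t' := by
  by_contra hne
  rcases h.2 t ht t' ht' hne with h | h <;> omega

lemma tag_S {n : ℤ} {C : Finset Triplet} {y : ℤ → Tag} (h : ValidCombination n C)
    (e : Encodes C y) {t : Triplet} (ht : t ∈ C) (hs : t.ts = t.te) :
    y t.ts = Tag.S t.sent (t.os - t.ts) (t.oe - t.ts) := by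
  rcases e t.ts with ⟨t', ht', h1, h2, h3⟩ | ⟨t', ht', h1, h2, h3⟩ |
    ⟨t', ht', h1, h2, h3⟩ | ⟨t', ht', h1, h2, h3⟩ | ⟨h5, _, _, _, _⟩
  · have heq : t = t' := overlap_eq h ht ht' t.ts le_rfl (le_of_eq hs) (by omega) (by omega)
    subst heq; exact h3
  · have heq : t = t' := overlap_eq h ht ht' t.ts le_rfl (le_of_eq hs) (by omega) (by omega)
    subst heq; omega
  · have heq : t = t' := overlap_eq h ht ht' t.ts le_rfl (le_of_eq hs) (by omega) (by omega)
    subst heq; omega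
  · have heq : t = t' := overlap_eq h ht ht' t.ts le_rfl (le_of_eq hs) (by omega) (by omega)
    subst heq; omega
  · exact absurd ⟨t, ht, rfl, hs.symm⟩ h5

lemma tag_B {n : ℤ} {C : Finset Triplet} {y : ℤ → Tag} (h : ValidCombination n C)
    (e : Encodes C y) {t : Triplet} (ht : t ∈ C) (hs : t.ts < t.te) :
    y t.ts = Tag.B t.sent (t.os - t.ts) (t.oe - t.ts) := by
  rcases e t.ts with ⟨t', ht', h1, h2, h3⟩ | ⟨t', ht', h1, h2, h3⟩ |
    ⟨t', ht', h1, h2, h3⟩ | ⟨t', ht', h1, h2, h3⟩ | ⟨_, h5, _, _, _⟩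
  · have heq : t = t' := overlap_eq h ht ht' t.ts le_rfl (by omega) (by omega) (by omega)
    subst heq; omega
  · have heq : t = t' := overlap_eq h ht ht' t.ts le_rfl (by omega) (by omega) (by omega)
    subst heq; exact h3
  · have heq : t = t' := overlap_eq h ht ht' t.ts le_rfl (by omega) (by omega) (by omega)
    subst heq; omega
  · have heq : t = t' := overlap_eq h ht ht' t.ts le_rfl (by omega) (by omega) (by omega)
    subst heq; omega
  · exact absurd ⟨t, ht, rfl, hs⟩ h5

lemma tag_E {n : ℤ} {C : Finset Triplet} {y : ℤ → Tag} (h : ValidCombination n C)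
    (e : Encodes C y) {t : Triplet} (ht : t ∈ C) (hs : t.ts < t.te) :
    y t.te = Tag.E := by
  rcases e t.te with ⟨t', ht', h1, h2, h3⟩ | ⟨t', ht', h1, h2, h3⟩ |
    ⟨t', ht', h1, h2, h3⟩ | ⟨t', ht', h1, h2, h3⟩ | ⟨_, _, h5, _, _⟩
  · have heq : t = t' := overlap_eq h ht ht' t.te (by omega) le_rfl (by omega) (by omega)
    subst heq; omega
  · have heq : t = t' := overlap_eq h ht ht' t.te (by omega) le_rfl (by omega) (by omega)
    subst heq; omega
  · exact h3
  · have heq : t = t' := overlap_eq h ht ht' t.te (by omega) le_rfl (by omega) (by omega)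
    subst heq; omega
  · exact absurd ⟨t, ht, rfl, hs⟩ h5

lemma tag_I {n : ℤ} {C : Finset Triplet} {y : ℤ → Tag} (h : ValidCombination n C)
    (e : Encodes C y) {t : Triplet} (ht : t ∈ C) {m : ℤ} (hm1 : t.ts < m)
    (hm2 : m < t.te) : y m = Tag.I := by
  rcases e m with ⟨t', ht', h1, h2, h3⟩ | ⟨t', ht', h1, h2, h3⟩ |
    ⟨t', ht', h1, h2, h3⟩ | ⟨t', ht', h1, h2, h3⟩ | ⟨_, _, _, h5, _⟩
  · have heq : t = t' := overlap_eq h ht ht' m (by omega) (by omega) (by omega) (by omega)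
    subst heq; omega
  · have heq : t = t' := overlap_eq h ht ht' m (by omega) (by omega) (by omega) (by omega)
    subst heq; omega
  · have heq : t = t' := overlap_eq h ht ht' m (by omega) (by omega) (by omega) (by omega)
    subst heq; omega
  · exact h3
  · exact absurd ⟨t, ht, hm1, hm2⟩ h5

lemma mem_of_encodes {n : ℤ} {C₁ C₂ : Finset Triplet}
    (h₁ : ValidCombination n C₁) (h₂ : ValidCombination n C₂)
    {y : ℤ → Tag} (e₁ : Encodes C₁ y) (e₂ : Encodes C₂ y)
    {t : Triplet} (ht : t ∈ C₁) : t ∈ C₂ := by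
  have hts : t.ts ≤ t.te := (h₁.1 t ht).2.1
  rcases eq_or_lt_of_le hts with hs | hs
  · -- single-word target
    have hy : y t.ts = Tag.S t.sent (t.os - t.ts) (t.oe - t.ts) := tag_S h₁ e₁ ht hs
    rcases e₂ t.ts with ⟨t', ht', h1, h2, h3⟩ | ⟨t', ht', h1, h2, h3⟩ |
      ⟨t', ht', h1, h2, h3⟩ | ⟨t', ht', h1, h2, h3⟩ | ⟨_, _, _, _, h5⟩
    · rw [hy] at h3
      obtain ⟨hsent, hos, hoe⟩ := Tag.S.inj h3.symm
      have : t = t' := by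
        cases t; cases t'; simp_all
      rw [this]; exact ht'
    · rw [hy] at h3; exact absurd h3 (by simp)
    · rw [hy] at h3; exact absurd h3 (by simp)
    · rw [hy] at h3; exact absurd h3 (by simp)
    · rw [hy] at h5; exact absurd h5 (by simp)
  · -- multi-word target
    have hyB : y t.ts = Tag.B t.sent (t.os - t.ts) (t.oe - t.ts) := tag_B h₁ e₁ ht hs
    rcases e₂ t.ts with ⟨t', ht', h1, h2, h3⟩ | ⟨t', ht', h1, h2, h3⟩ |
      ⟨t', ht', h1, h2, h3⟩ | ⟨t', ht', h1, h2, h3⟩ | ⟨_, _, _, _, h5⟩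
    · rw [hyB] at h3; exact absurd h3 (by simp)
    · rw [hyB] at h3
      obtain ⟨hsent, hos, hoe⟩ := Tag.B.inj h3.symm
      -- show t'.te = t.te
      have hte : t'.te = t.te := by
        by_contra hne
        rcases lt_or_gt_of_ne hne with hlt | hgt
        · have hI : y t'.te = Tag.I := tag_I h₁ e₁ ht (by omega) hlt
          have hE : y t'.te = Tag.E := tag_E h₂ e₂ ht' (by omega)
          rw [hI] at hE; exact absurd hE (by simp)
        · have hI : y t.te = Tag.I := tag_I h₂ e₂ ht' (by omega) hgt
          have hE : y t.te = Tag.E := tag_E h₁ e₁ ht hs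
          rw [hI] at hE; exact absurd hE (by simp)
      have : t = t' := by
        cases t; cases t'; simp_all
      rw [this]; exact ht'
    · rw [hyB] at h3; exact absurd h3 (by simp)
    · rw [hyB] at h3; exact absurd h3 (by simp)
    · rw [hyB] at h5; exact absurd h5 (by simp)

/-- For a sentence length `n ≥ 1`, the encoding map from valid
combinations of aspect sentiment triplets to tag sequences is injective: if two
valid combinations produce the same tag sequence, they are equal as sets. -/
theorem encoding_injective
    (n : ℤ) (hn : 1 ≤ n) (C₁ C₂ : Finset Triplet)
    (h₁ : ValidCombination n C₁) (h₂ : ValidCombination n C₂)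
    (y : ℤ → Tag) (e₁ : Encodes C₁ y) (e₂ : Encodes C₂ y) :
    C₁ = C₂ := by
  apply Finset.ext
  intro t
  exact ⟨fun h => mem_of_encodes h₁ h₂ e₁ e₂ h, fun h => mem_of_encodes h₂ h₁ e₂ e₁ h⟩
end

section
/- Fix a sentence length n ≥ 1. The encoding map is surjective onto the set of valid tag sequences: for every tag sequence of length n that is valid under the position-aware tagging scheme, there exists a valid combination of aspect sentiment triplets over the sentence whose encoding is exactly that tag sequence. Concretely, the combination consisting of one triplet for each maximal BIOES target segment — with target span given by the segment's boundaries, opinion span (i+j, i+k) read off from the offsets j,k carried by the segment's initial tag B^ε_{j,k} or S^ε_{j,k} at position i, and sentiment ε carried by that same tag — is a valid combination whose encoding recovers the given tag sequence. -/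
/-- For a sentence length `n ≥ 1`, the encoding map is surjective
onto the valid tag sequences: every valid tag sequence `y` is the encoding of some
valid combination of triplets — concretely, of the combination consisting of one
triplet per maximal `BIOES` target segment of `y`, with opinion span and sentiment
read off from the offsets and sentiment carried by the segment's initial tag. -/
theorem encoding_surjective
    (n : ℤ) (hn : 1 ≤ n) (y : ℤ → Tag) (hy : ValidTagSeq n y) :
    ∃ C : Finset Triplet, DecodesTo y C ∧ ValidCombination n C ∧ Encodes C y := by
  classical
  obtain ⟨hO, hB, hI, hE, hoff⟩ := hy
  -- positions carrying a non-O tag lie in the sentence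
  have hrange : ∀ i : ℤ, y i ≠ Tag.O → 1 ≤ i ∧ i ≤ n := by
    intro i h
    constructor
    · by_contra h1
      exact h (hO i (Or.inl (not_le.mp h1)))
    · by_contra h1
      exact h (hO i (Or.inr (not_le.mp h1)))
  have subB : ∀ i : ℤ, (y i).sub = SubTag.B → ∃ ε j k, y i = Tag.B ε j k := by
    intro i h
    cases hyi : y i <;> rw [hyi] at h <;> simp [Tag.sub] at h
    exact ⟨_, _, _, rfl⟩
  -- uniqueness of decoded triplet given its start
  have huniq : ∀ t₁ t₂ : Triplet, DecodedTriplet y t₁ → DecodedTriplet y t₂ →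
      t₁.ts = t₂.ts → t₁ = t₂ := by
    intro t₁ t₂ h₁ h₂ hts
    rcases h₁ with ⟨he1, htag1⟩ | ⟨hlt1, htag1, hE1, hI1⟩ <;>
      rcases h₂ with ⟨he2, htag2⟩ | ⟨hlt2, htag2, hE2, hI2⟩
    · rw [hts, htag2] at htag1
      injection htag1 with h1 h2 h3
      obtain ⟨a1, b1, c1, d1, s1⟩ := t₁
      obtain ⟨a2, b2, c2, d2, s2⟩ := t₂
      simp_all
    · rw [hts, htag2] at htag1
      simp at htag1
    · rw [hts, htag2] at htag1
      simp at htag1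
    · have hte : t₁.te = t₂.te := by
        by_contra hne
        rcases lt_or_gt_of_ne hne with h | h
        · have h' := hI2 t₁.te (hts ▸ hlt1) h
          rw [hE1] at h'
          simp at h'
        · have h' := hI1 t₂.te (hts ▸ hlt2) h
          rw [hE2] at h'
          simp at h'
      rw [hts, htag2] at htag1
      injection htag1 with h1 h2 h3
      obtain ⟨a1, b1, c1, d1, s1⟩ := t₁
      obtain ⟨a2, b2, c2, d2, s2⟩ := t₂
      simp_all
  -- the decoded set is finite
  have hfin : {t : Triplet | DecodedTriplet y t}.Finite := by
    have himg : (Triplet.ts '' {t : Triplet | DecodedTriplet y t}) ⊆ Set.Icc 1 n := by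
      rintro x ⟨t, ht, rfl⟩
      rcases ht with ⟨he, htag⟩ | ⟨hlt, htag, _, _⟩ <;>
        exact Set.mem_Icc.mpr (hrange t.ts (by rw [htag]; simp))
    exact Set.Finite.of_finite_image ((Set.finite_Icc 1 n).subset himg)
      (fun t₁ h₁ t₂ h₂ h => huniq t₁ t₂ h₁ h₂ h)
  set C : Finset Triplet := hfin.toFinset with hC
  have hmem : ∀ t : Triplet, t ∈ C ↔ DecodedTriplet y t := by
    intro t; rw [hC, Set.Finite.mem_toFinset]; rfl
  -- each decoded triplet is a valid triplet
  have hvalid : ∀ t : Triplet, DecodedTriplet y t → ValidTriplet n t := by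
    intro t ht
    rcases ht with ⟨he, htag⟩ | ⟨hlt, htag, hEend, _⟩
    · have h1 := hrange t.ts (by rw [htag]; simp)
      have h2 := hoff t.ts t.sent _ _ h1.1 h1.2 (Or.inr htag)
      exact ⟨h1.1, by omega, by omega, by omega, by omega, by omega⟩
    · have h1 := hrange t.ts (by rw [htag]; simp)
      have h3 := hrange t.te (by
        intro h; rw [h] at hEend; simp [Tag.sub] at hEend)
      have h2 := hoff t.ts t.sent _ _ h1.1 h1.2 (Or.inl htag)
      exact ⟨h1.1, by omega, h3.2, by omega, by omega, by omega⟩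
  -- key overlap lemma
  have hkey : ∀ t₁ t₂ : Triplet, DecodedTriplet y t₁ → DecodedTriplet y t₂ →
      t₁.ts < t₂.ts → t₂.ts ≤ t₁.te → False := by
    intro t₁ t₂ h₁ h₂ hlt hle
    have htag2 : (y t₂.ts).sub = SubTag.B ∨ (y t₂.ts).sub = SubTag.S := by
      rcases h₂ with ⟨_, htag⟩ | ⟨_, htag, _, _⟩
      · right; rw [htag]; rfl
      · left; rw [htag]; rfl
    rcases h₁ with ⟨he, htag⟩ | ⟨hlt1, htag, hE1, hI1⟩
    · omega
    · rcases lt_or_eq_of_le hle with h | h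
      · have h' := hI1 t₂.ts hlt h
        rcases htag2 with h2 | h2 <;> rw [h'] at h2 <;> simp at h2
      · rw [← h] at hE1
        rcases htag2 with h2 | h2 <;> rw [hE1] at h2 <;> simp at h2
  refine ⟨C, hmem, ⟨fun t ht => hvalid t ((hmem t).mp ht), ?_⟩, ?_⟩
  · intro t₁ ht₁ t₂ ht₂ hne
    have d₁ := (hmem t₁).mp ht₁
    have d₂ := (hmem t₂).mp ht₂
    by_contra hc
    push_neg at hc
    have hts : t₁.ts ≠ t₂.ts := fun h => hne (huniq t₁ t₂ d₁ d₂ h)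
    rcases lt_or_gt_of_ne hts with h | h
    · exact hkey t₁ t₂ d₁ d₂ h (by omega)
    · exact hkey t₂ t₁ d₂ d₁ h (by omega)
  · intro i
    cases hyi : y i with
    | O =>
      right; right; right; right
      refine ⟨?_, ?_, ?_, ?_, rfl⟩
      · rintro ⟨t, htC, h1, h2⟩
        rcases (hmem t).mp htC with ⟨he, htag⟩ | ⟨hlt, htag, _, _⟩
        · rw [h1, hyi] at htag; simp at htag
        · omega
      · rintro ⟨t, htC, h1, h2⟩
        rcases (hmem t).mp htC with ⟨he, htag⟩ | ⟨hlt, htag, _, _⟩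
        · omega
        · rw [h1, hyi] at htag; simp at htag
      · rintro ⟨t, htC, h1, h2⟩
        rcases (hmem t).mp htC with ⟨he, htag⟩ | ⟨hlt, htag, hE1, _⟩
        · omega
        · rw [h1, hyi] at hE1; simp [Tag.sub] at hE1
      · rintro ⟨t, htC, h1, h2⟩
        rcases (hmem t).mp htC with ⟨he, htag⟩ | ⟨hlt, htag, _, hI1⟩
        · omega
        · have h' := hI1 i h1 h2
          rw [hyi] at h'; simp [Tag.sub] at h'
    | S ε j k =>
      left
      refine ⟨⟨i, i, i + j, i + k, ε⟩, ?_, rfl, rfl, ?_⟩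
      · rw [hmem]
        left
        refine ⟨rfl, ?_⟩
        simpa [add_sub_cancel_left] using hyi
      · simp [add_sub_cancel_left]
    | B ε j k =>
      have hr := hrange i (by rw [hyi]; simp)
      obtain ⟨e, hie, hen, heE, hintI⟩ := hB i hr.1 hr.2 (by rw [hyi]; rfl)
      right; left
      refine ⟨⟨i, e, i + j, i + k, ε⟩, ?_, rfl, hie, ?_⟩
      · rw [hmem]
        right
        exact ⟨hie, by simpa [add_sub_cancel_left] using hyi, heE, hintI⟩
      · simp [add_sub_cancel_left]
    | E =>
      have hr := hrange i (by rw [hyi]; simp)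
      obtain ⟨s, hs1, hsi, hsB, hintI⟩ := hE i hr.1 hr.2 (by rw [hyi]; rfl)
      obtain ⟨ε, j, k, hstag⟩ := subB s hsB
      right; right; left
      refine ⟨⟨s, i, s + j, s + k, ε⟩, ?_, rfl, hsi, rfl⟩
      rw [hmem]
      right
      exact ⟨hsi, by simpa [add_sub_cancel_left] using hstag,
        by rw [hyi]; rfl, hintI⟩
    | I =>
      have hr := hrange i (by rw [hyi]; simp)
      obtain ⟨s, e, hs1, hsi, hie, hen, hsB, heE, hintI⟩ :=
        hI i hr.1 hr.2 (by rw [hyi]; rfl)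
      obtain ⟨ε, j, k, hstag⟩ := subB s hsB
      right; right; right; left
      refine ⟨⟨s, e, s + j, s + k, ε⟩, ?_, hsi, hie, rfl⟩
      rw [hmem]
      right
      exact ⟨hsi.trans hie, by simpa [add_sub_cancel_left] using hstag, heE, hintI⟩
end

section
/- (Theorem 1) Fix a sentence length n ≥ 1. There is a one-to-one correspondence between valid tag sequences of length n under the position-aware tagging scheme and valid combinations of aspect sentiment triplets over the sentence (finite sets of triplets whose target spans are pairwise disjoint, so that targets do not overlap with one another and each target has exactly one corresponding opinion span and sentiment): the encoding procedure is a bijection from the set of valid combinations of triplets onto the set of valid tag sequences. -/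
section Aux

variable {n : ℤ} {C : Finset Triplet} {y : ℤ → Tag}

lemma Triplet.ext' {a b : Triplet} (h1 : a.ts = b.ts) (h2 : a.te = b.te)
    (h3 : a.os = b.os) (h4 : a.oe = b.oe) (h5 : a.sent = b.sent) : a = b := by
  cases a; cases b; simp_all

lemma eq_E_of_sub {g : Tag} (h : g.sub = SubTag.E) : g = Tag.E := by
  cases g <;> simp [Tag.sub] at h ⊢

lemma eq_I_of_sub {g : Tag} (h : g.sub = SubTag.I) : g = Tag.I := by
  cases g <;> simp [Tag.sub] at h ⊢

lemma exists_of_sub_B {g : Tag} (h : g.sub = SubTag.B) :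
    ∃ ε j k, g = Tag.B ε j k := by
  cases g <;> simp [Tag.sub] at h ⊢

lemma exists_of_sub_S {g : Tag} (h : g.sub = SubTag.S) :
    ∃ ε j k, g = Tag.S ε j k := by
  cases g <;> simp [Tag.sub] at h ⊢

/-- In a valid combination two triplets whose targets share a position coincide. -/
lemma same_of_mem (hC : ValidCombination n C) {t₁ t₂ : Triplet} (h1 : t₁ ∈ C)
    (h2 : t₂ ∈ C) {i : ℤ} (a1 : t₁.ts ≤ i) (b1 : i ≤ t₁.te)
    (a2 : t₂.ts ≤ i) (b2 : i ≤ t₂.te) : t₁ = t₂ := by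
  by_contra hne
  rcases hC.2 t₁ h1 t₂ h2 hne with h | h <;> omega

/-- Master lemma: if a triplet of `C` covers position `i`, the encoding at `i`
is determined by that triplet. -/
lemma tag_at (hC : ValidCombination n C) {i : ℤ} {g : Tag}
    (hE : EncodesAt C i g) {t : Triplet} (ht : t ∈ C)
    (h1 : t.ts ≤ i) (h2 : i ≤ t.te) :
    (t.ts = i ∧ t.te = i ∧ g = Tag.S t.sent (t.os - t.ts) (t.oe - t.ts)) ∨
    (t.ts = i ∧ i < t.te ∧ g = Tag.B t.sent (t.os - t.ts) (t.oe - t.ts)) ∨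
    (t.te = i ∧ t.ts < i ∧ g = Tag.E) ∨
    (t.ts < i ∧ i < t.te ∧ g = Tag.I) := by
  rcases hE with ⟨t', ht', e1, e2, hg⟩ | ⟨t', ht', e1, e2, hg⟩ |
      ⟨t', ht', e1, e2, hg⟩ | ⟨t', ht', e1, e2, hg⟩ | ⟨n1, n2, n3, n4, hg⟩
  · have : t' = t := same_of_mem hC ht' ht (by omega) (by omega) h1 h2
    subst this; exact Or.inl ⟨e1, e2, hg⟩
  · have : t' = t := same_of_mem hC ht' ht (by omega) (by omega) h1 h2
    subst this; exact Or.inr (Or.inl ⟨e1, e2, hg⟩)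
  · have : t' = t := same_of_mem hC ht' ht (by omega) (by omega) h1 h2
    subst this; exact Or.inr (Or.inr (Or.inl ⟨e1, e2, hg⟩))
  · have : t' = t := same_of_mem hC ht' ht (by omega) (by omega) h1 h2
    subst this; exact Or.inr (Or.inr (Or.inr ⟨e1, e2, hg⟩))
  · exfalso
    rcases eq_or_lt_of_le h1 with e | l
    · rcases eq_or_lt_of_le h2 with e2 | l2
      · exact n1 ⟨t, ht, by omega, by omega⟩
      · exact n2 ⟨t, ht, by omega, l2⟩
    · rcases eq_or_lt_of_le h2 with e2 | l2
      · exact n3 ⟨t, ht, by omega, l⟩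
      · exact n4 ⟨t, ht, l, l2⟩

lemma no_tag {i : ℤ} {g : Tag} (hE : EncodesAt C i g)
    (hno : ¬ ∃ t ∈ C, t.ts ≤ i ∧ i ≤ t.te) : g = Tag.O := by
  rcases hE with ⟨t', ht', e1, e2, hg⟩ | ⟨t', ht', e1, e2, hg⟩ |
      ⟨t', ht', e1, e2, hg⟩ | ⟨t', ht', e1, e2, hg⟩ | ⟨n1, n2, n3, n4, hg⟩
  · exact absurd ⟨t', ht', by omega, by omega⟩ hno
  · exact absurd ⟨t', ht', by omega, by omega⟩ hno
  · exact absurd ⟨t', ht', by omega, by omega⟩ hno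
  · exact absurd ⟨t', ht', by omega, by omega⟩ hno
  · exact hg

lemma encodesAt_unique_s3 (hC : ValidCombination n C) {i : ℤ} {g g' : Tag}
    (h : EncodesAt C i g) (h' : EncodesAt C i g') : g = g' := by
  by_cases hcov : ∃ t ∈ C, t.ts ≤ i ∧ i ≤ t.te
  · obtain ⟨t, ht, h1, h2⟩ := hcov
    rcases tag_at hC h ht h1 h2 with ⟨a1, a2, a3⟩ | ⟨a1, a2, a3⟩ | ⟨a1, a2, a3⟩ | ⟨a1, a2, a3⟩ <;>
      rcases tag_at hC h' ht h1 h2 with ⟨b1, b2, b3⟩ | ⟨b1, b2, b3⟩ | ⟨b1, b2, b3⟩ | ⟨b1, b2, b3⟩ <;>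
      first
        | omega
        | rw [a3, b3]
  · rw [no_tag h hcov, no_tag h' hcov]

/-- The encoding function. -/
noncomputable def tagOf (t : Triplet) (i : ℤ) : Tag :=
  if t.ts = i then
    (if t.te = i then Tag.S t.sent (t.os - t.ts) (t.oe - t.ts)
     else Tag.B t.sent (t.os - t.ts) (t.oe - t.ts))
  else if t.te = i then Tag.E else Tag.I

noncomputable def encode (C : Finset Triplet) (i : ℤ) : Tag :=
  if h : ∃ t ∈ C, t.ts ≤ i ∧ i ≤ t.te then tagOf h.choose i else Tag.O

lemma encodesAt_tagOf {C : Finset Triplet} {t : Triplet} {i : ℤ} (ht : t ∈ C)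
    (h1 : t.ts ≤ i) (h2 : i ≤ t.te) : EncodesAt C i (tagOf t i) := by
    unfold tagOf
    by_cases e1 : t.ts = i
    · by_cases e2 : t.te = i
      · rw [if_pos e1, if_pos e2]
        exact Or.inl ⟨t, ht, e1, e2, rfl⟩
      · rw [if_pos e1, if_neg e2]
        exact Or.inr (Or.inl ⟨t, ht, e1, by omega, rfl⟩)
    · by_cases e2 : t.te = i
      · rw [if_neg e1, if_pos e2]
        exact Or.inr (Or.inr (Or.inl ⟨t, ht, e2, by omega, rfl⟩))
      · rw [if_neg e1, if_neg e2]
        exact Or.inr (Or.inr (Or.inr (Or.inl ⟨t, ht, by omega, by omega, rfl⟩)))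
lemma encodes_encode (C : Finset Triplet) : Encodes C (encode C) := by
  intro i
  by_cases h : ∃ t ∈ C, t.ts ≤ i ∧ i ≤ t.te
  · rw [encode, dif_pos h]
    obtain ⟨ht, h1, h2⟩ := h.choose_spec
    exact encodesAt_tagOf ht h1 h2
  · rw [encode, dif_neg h]
    refine Or.inr (Or.inr (Or.inr (Or.inr ⟨?_, ?_, ?_, ?_, rfl⟩))) <;>
      · rintro ⟨t, ht, a, b⟩
        exact h ⟨t, ht, by omega, by omega⟩

/-- Tags at the start / end / interior of a target segment of a valid combination. -/
lemma tag_start_S (hC : ValidCombination n C) (hE : Encodes C y) {t : Triplet}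
    (ht : t ∈ C) (h : t.ts = t.te) :
    y t.ts = Tag.S t.sent (t.os - t.ts) (t.oe - t.ts) := by
  rcases tag_at hC (hE t.ts) ht le_rfl (by omega) with
      ⟨_, _, hg⟩ | ⟨_, hlt, _⟩ | ⟨_, hlt, _⟩ | ⟨hlt, _, _⟩
  · exact hg
  all_goals omega

lemma tag_start_B (hC : ValidCombination n C) (hE : Encodes C y) {t : Triplet}
    (ht : t ∈ C) (h : t.ts < t.te) :
    y t.ts = Tag.B t.sent (t.os - t.ts) (t.oe - t.ts) := by
  rcases tag_at hC (hE t.ts) ht le_rfl (by omega) with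
      ⟨_, h2, hg⟩ | ⟨_, _, hg⟩ | ⟨_, hlt, _⟩ | ⟨hlt, _, _⟩
  · omega
  · exact hg
  all_goals omega

lemma tag_end (hC : ValidCombination n C) (hE : Encodes C y) {t : Triplet}
    (ht : t ∈ C) (h : t.ts < t.te) : y t.te = Tag.E := by
  rcases tag_at hC (hE t.te) ht (by omega) le_rfl with
      ⟨h1, _, _⟩ | ⟨_, hlt, _⟩ | ⟨_, _, hg⟩ | ⟨_, hlt, _⟩
  · omega
  · omega
  · exact hg
  · omega

lemma tag_mid (hC : ValidCombination n C) (hE : Encodes C y) {t : Triplet}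
    (ht : t ∈ C) {m : ℤ} (h1 : t.ts < m) (h2 : m < t.te) : y m = Tag.I := by
  rcases tag_at hC (hE m) ht (by omega) (by omega) with
      ⟨e1, _, _⟩ | ⟨e1, _, _⟩ | ⟨e1, _, _⟩ | ⟨_, _, hg⟩
  · omega
  · omega
  · omega
  · exact hg

/-- The encoding of a valid combination is a valid tag sequence. -/
lemma valid_of (hC : ValidCombination n C) (hE : Encodes C y) : ValidTagSeq n y := by
  refine ⟨?_, ?_, ?_, ?_, ?_⟩
  · intro i hi
    refine no_tag (hE i) ?_
    rintro ⟨t, ht, a, b⟩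
    have hv := hC.1 t ht
    obtain ⟨v1, v2, v3, v4, v5, v6⟩ := hv
    omega
  · intro i hi1 hi2 hsub
    rcases hE i with ⟨t, ht, e1, e2, hg⟩ | ⟨t, ht, e1, e2, hg⟩ |
        ⟨t, ht, e1, e2, hg⟩ | ⟨t, ht, e1, e2, hg⟩ | ⟨_, _, _, _, hg⟩ <;>
      rw [hg] at hsub
    · simp [Tag.sub] at hsub
    · obtain ⟨v1, v2, v3, v4, v5, v6⟩ := hC.1 t ht
      refine ⟨t.te, by omega, by omega, ?_, ?_⟩
      · rw [tag_end hC hE ht (by omega)]; rfl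
      · intro m hm1 hm2
        rw [tag_mid hC hE ht (by omega) hm2]; rfl
    · simp [Tag.sub] at hsub
    · simp [Tag.sub] at hsub
    · simp [Tag.sub] at hsub
  · intro i hi1 hi2 hsub
    rcases hE i with ⟨t, ht, e1, e2, hg⟩ | ⟨t, ht, e1, e2, hg⟩ |
        ⟨t, ht, e1, e2, hg⟩ | ⟨t, ht, e1, e2, hg⟩ | ⟨_, _, _, _, hg⟩ <;>
      rw [hg] at hsub
    · simp [Tag.sub] at hsub
    · simp [Tag.sub] at hsub
    · simp [Tag.sub] at hsub
    · obtain ⟨v1, v2, v3, v4, v5, v6⟩ := hC.1 t ht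
      refine ⟨t.ts, t.te, by omega, by omega, by omega, by omega, ?_, ?_, ?_⟩
      · rw [tag_start_B hC hE ht (by omega)]; rfl
      · rw [tag_end hC hE ht (by omega)]; rfl
      · intro m hm1 hm2
        rw [tag_mid hC hE ht hm1 hm2]; rfl
    · simp [Tag.sub] at hsub
  · intro i hi1 hi2 hsub
    rcases hE i with ⟨t, ht, e1, e2, hg⟩ | ⟨t, ht, e1, e2, hg⟩ |
        ⟨t, ht, e1, e2, hg⟩ | ⟨t, ht, e1, e2, hg⟩ | ⟨_, _, _, _, hg⟩ <;>
      rw [hg] at hsub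
    · simp [Tag.sub] at hsub
    · simp [Tag.sub] at hsub
    · obtain ⟨v1, v2, v3, v4, v5, v6⟩ := hC.1 t ht
      refine ⟨t.ts, by omega, by omega, ?_, ?_⟩
      · rw [tag_start_B hC hE ht (by omega)]; rfl
      · intro m hm1 hm2
        rw [tag_mid hC hE ht hm1 (by omega)]; rfl
    · simp [Tag.sub] at hsub
    · simp [Tag.sub] at hsub
  · intro i ε j k hi1 hi2 hor
    have key : ∀ t : Triplet, t ∈ C → t.ts = i →
        (ε = t.sent ∧ j = t.os - t.ts ∧ k = t.oe - t.ts) →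
        j ≤ k ∧ 1 ≤ i + j ∧ i + k ≤ n := by
      rintro t ht e1 ⟨hs, hj, hk⟩
      obtain ⟨v1, v2, v3, v4, v5, v6⟩ := hC.1 t ht
      omega
    rcases hor with hg | hg <;>
      rcases hE i with ⟨t, ht, e1, e2, hg'⟩ | ⟨t, ht, e1, e2, hg'⟩ |
          ⟨t, ht, e1, e2, hg'⟩ | ⟨t, ht, e1, e2, hg'⟩ | ⟨_, _, _, _, hg'⟩ <;>
        rw [hg] at hg' <;> simp at hg' <;>
      exact key t ht e1 hg'

/-- A valid combination is exactly decoded from any of its encodings. -/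
lemma mem_iff_decoded (hC : ValidCombination n C) (hE : Encodes C y) :
    DecodesTo y C := by
  intro t
  constructor
  · intro ht
    obtain ⟨v1, v2, v3, v4, v5, v6⟩ := hC.1 t ht
    rcases eq_or_lt_of_le v2 with h | h
    · exact Or.inl ⟨h, tag_start_S hC hE ht h⟩
    · refine Or.inr ⟨h, tag_start_B hC hE ht h, ?_, ?_⟩
      · rw [tag_end hC hE ht h]; rfl
      · intro m hm1 hm2; rw [tag_mid hC hE ht hm1 hm2]; rfl
  · rintro (⟨h1, h2⟩ | ⟨h1, h2, h3, h4⟩)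
    · rcases hE t.ts with ⟨t', ht', e1, e2, hg⟩ | ⟨t', ht', e1, e2, hg⟩ |
          ⟨t', ht', e1, e2, hg⟩ | ⟨t', ht', e1, e2, hg⟩ | ⟨_, _, _, _, hg⟩ <;>
        rw [h2] at hg
      · obtain ⟨hs, hj, hk⟩ := (by simpa using hg :
            t.sent = t'.sent ∧ t.os - t.ts = t'.os - t'.ts ∧ t.oe - t.ts = t'.oe - t'.ts)
        have : t' = t := Triplet.ext' e1 (by omega) (by omega) (by omega) hs.symm
        exact this ▸ ht'
      · simp at hg
      · simp at hg
      · simp at hg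
      · simp at hg
    · rcases hE t.ts with ⟨t', ht', e1, e2, hg⟩ | ⟨t', ht', e1, e2, hg⟩ |
          ⟨t', ht', e1, e2, hg⟩ | ⟨t', ht', e1, e2, hg⟩ | ⟨_, _, _, _, hg⟩ <;>
        rw [h2] at hg
      · simp at hg
      · obtain ⟨hs, hj, hk⟩ := (by simpa using hg :
            t.sent = t'.sent ∧ t.os - t.ts = t'.os - t'.ts ∧ t.oe - t.ts = t'.oe - t'.ts)
        have hte : t'.te = t.te := by
          rcases lt_trichotomy t'.te t.te with hl | he | hl
          · have := h4 t'.te (by omega) hl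
            rw [tag_end hC hE ht' (by omega)] at this
            simp [Tag.sub] at this
          · exact he
          · have := tag_mid hC hE ht' (t := t') (m := t.te) (by omega) hl
            rw [this] at h3
            simp [Tag.sub] at h3
        have : t' = t := Triplet.ext' e1 hte (by omega) (by omega) hs.symm
        exact this ▸ ht'
      · simp at hg
      · simp at hg
      · simp at hg

/-- Basic facts about decoded triplets of a valid tag sequence. -/
lemma dec_ts_range (hy : ValidTagSeq n y) {t : Triplet} (hd : DecodedTriplet y t) :
    1 ≤ t.ts ∧ t.ts ≤ n := by
  have hne : y t.ts ≠ Tag.O := by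
    rcases hd with ⟨_, h2⟩ | ⟨_, h2, _, _⟩ <;> rw [h2] <;> simp
  have : ¬ (t.ts < 1 ∨ n < t.ts) := fun h => hne (hy.1 t.ts h)
  omega

lemma dec_unique (hy : ValidTagSeq n y) {t₁ t₂ : Triplet}
    (hd1 : DecodedTriplet y t₁) (hd2 : DecodedTriplet y t₂)
    (hts : t₁.ts = t₂.ts) : t₁ = t₂ := by
  rcases hd1 with ⟨a1, a2⟩ | ⟨a1, a2, a3, a4⟩ <;>
    rcases hd2 with ⟨b1, b2⟩ | ⟨b1, b2, b3, b4⟩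
  · rw [hts, b2] at a2
    obtain ⟨hs, hj, hk⟩ := (by simpa using a2 :
        t₂.sent = t₁.sent ∧ t₂.os = t₁.os ∧ t₂.oe = t₁.oe)
    exact Triplet.ext' hts (by omega) (by omega) (by omega) hs.symm
  · rw [hts, b2] at a2; simp at a2
  · rw [hts, b2] at a2; simp at a2
  · rw [hts, b2] at a2
    obtain ⟨hs, hj, hk⟩ := (by simpa using a2 :
        t₂.sent = t₁.sent ∧ t₂.os = t₁.os ∧ t₂.oe = t₁.oe)
    have hte : t₁.te = t₂.te := by
      rcases lt_trichotomy t₁.te t₂.te with hl | he | hl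
      · have := b4 t₁.te (by omega) hl
        rw [this] at a3; simp at a3
      · exact he
      · have := a4 t₂.te (by omega) hl
        rw [this] at b3; simp at b3
    exact Triplet.ext' hts hte (by omega) (by omega) hs.symm

lemma dec_valid_triplet (hy : ValidTagSeq n y) {t : Triplet}
    (hd : DecodedTriplet y t) : ValidTriplet n t := by
  obtain ⟨hr1, hr2⟩ := dec_ts_range hy hd
  have hle : t.ts ≤ t.te := by
    rcases hd with ⟨h1, _⟩ | ⟨h1, _, _, _⟩ <;> omega
  have hte : t.te ≤ n := by
    rcases hd with ⟨h1, _⟩ | ⟨h1, _, h3, _⟩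
    · omega
    · by_contra hc
      rw [hy.1 t.te (by omega)] at h3
      simp [Tag.sub] at h3
  have hoff := hy.2.2.2.2 t.ts t.sent (t.os - t.ts) (t.oe - t.ts) hr1 hr2
  rcases hd with ⟨h1, h2⟩ | ⟨h1, h2, _, _⟩
  · have := hoff (Or.inr h2); exact ⟨hr1, hle, hte, by omega, by omega, by omega⟩
  · have := hoff (Or.inl h2); exact ⟨hr1, hle, hte, by omega, by omega, by omega⟩

lemma dec_disjoint_aux (hy : ValidTagSeq n y) {t₁ t₂ : Triplet}
    (hd1 : DecodedTriplet y t₁) (hd2 : DecodedTriplet y t₂)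
    (h : t₁.ts < t₂.ts) (h2 : t₂.ts ≤ t₁.te) : False := by
  have hb : t₁.ts < t₁.te := by omega
  rcases hd1 with ⟨e1, _⟩ | ⟨e1, e2, e3, e4⟩
  · omega
  have hsub2 : (y t₂.ts).sub = SubTag.S ∨ (y t₂.ts).sub = SubTag.B := by
    rcases hd2 with ⟨_, g2⟩ | ⟨_, g2, _, _⟩ <;> rw [g2] <;> simp [Tag.sub]
  rcases eq_or_lt_of_le h2 with he | hl
  · rw [he] at hsub2
    rcases hsub2 with hh | hh <;> rw [e3] at hh <;> simp at hh
  · have := e4 t₂.ts h hl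
    rcases hsub2 with hh | hh <;> rw [this] at hh <;> simp at hh

lemma dec_disjoint (hy : ValidTagSeq n y) {t₁ t₂ : Triplet}
    (hd1 : DecodedTriplet y t₁) (hd2 : DecodedTriplet y t₂) (hne : t₁ ≠ t₂) :
    t₁.te < t₂.ts ∨ t₂.te < t₁.ts := by
  by_contra hc
  push_neg at hc
  rcases lt_trichotomy t₁.ts t₂.ts with hl | he | hl
  · exact dec_disjoint_aux hy hd1 hd2 hl (by omega)
  · exact hne (dec_unique hy hd1 hd2 he)
  · exact dec_disjoint_aux hy hd2 hd1 hl (by omega)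

end Aux
/-- Theorem 1: For a sentence length `n ≥ 1`, there is a one-to-one
correspondence between valid combinations of aspect sentiment triplets over the
sentence and valid tag sequences of length `n`: the encoding procedure, viewed as
a map from valid combinations to valid tag sequences, is a bijection. -/
theorem encoding_bijective (n : ℤ) (hn : 1 ≤ n) :
    ∃ F : {C : Finset Triplet // ValidCombination n C} →
          {y : ℤ → Tag // ValidTagSeq n y},
      (∀ C, Encodes C.1 (F C).1) ∧ Function.Bijective F := by
  refine ⟨fun C => ⟨encode C.1, valid_of C.2 (encodes_encode C.1)⟩,
    fun C => encodes_encode C.1, ?_, ?_⟩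
  · -- injective
    intro C₁ C₂ h
    have he : encode C₁.1 = encode C₂.1 := congrArg Subtype.val h
    refine Subtype.ext (Finset.ext fun t => ?_)
    rw [mem_iff_decoded C₁.2 (encodes_encode C₁.1) t,
        mem_iff_decoded C₂.2 (encodes_encode C₂.1) t, he]
  · -- surjective
    rintro ⟨y, hy⟩
    have hfin : {t : Triplet | DecodedTriplet y t}.Finite := by
      refine Set.Finite.of_finite_image (f := Triplet.ts) ?_ ?_
      · refine (Set.finite_Icc (1 : ℤ) n).subset ?_
        rintro x ⟨t, ht, rfl⟩
        exact Set.mem_Icc.mpr (dec_ts_range hy ht)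
      · intro a ha b hb hab
        exact dec_unique hy ha hb hab
    set C : Finset Triplet := hfin.toFinset with hCdef
    have hmem : ∀ t : Triplet, t ∈ C ↔ DecodedTriplet y t := fun t =>
      hfin.mem_toFinset
    have hC : ValidCombination n C :=
      ⟨fun t ht => dec_valid_triplet hy ((hmem t).1 ht),
       fun t₁ h1 t₂ h2 hne => dec_disjoint hy ((hmem t₁).1 h1) ((hmem t₂).1 h2) hne⟩
    have hEy : Encodes C y := by
      intro i
      by_cases h1 : ∃ t ∈ C, t.ts = i ∧ t.te = i
      · obtain ⟨t, ht, e1, e2⟩ := h1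
        rcases (hmem t).1 ht with ⟨d1, d2⟩ | ⟨d1, _, _, _⟩
        · exact Or.inl ⟨t, ht, e1, e2, by rw [← e1]; exact d2⟩
        · omega
      by_cases h2 : ∃ t ∈ C, t.ts = i ∧ i < t.te
      · obtain ⟨t, ht, e1, e2⟩ := h2
        rcases (hmem t).1 ht with ⟨d1, _⟩ | ⟨d1, d2, _, _⟩
        · omega
        · exact Or.inr (Or.inl ⟨t, ht, e1, e2, by rw [← e1]; exact d2⟩)
      by_cases h3 : ∃ t ∈ C, t.te = i ∧ t.ts < i
      · obtain ⟨t, ht, e1, e2⟩ := h3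
        rcases (hmem t).1 ht with ⟨d1, _⟩ | ⟨d1, _, d3, _⟩
        · omega
        · exact Or.inr (Or.inr (Or.inl ⟨t, ht, e1, e2, by
            rw [← e1]; exact eq_E_of_sub d3⟩))
      by_cases h4 : ∃ t ∈ C, t.ts < i ∧ i < t.te
      · obtain ⟨t, ht, e1, e2⟩ := h4
        rcases (hmem t).1 ht with ⟨d1, _⟩ | ⟨d1, _, _, d4⟩
        · omega
        · exact Or.inr (Or.inr (Or.inr (Or.inl ⟨t, ht, e1, e2,
            eq_I_of_sub (d4 i e1 e2)⟩)))
      refine Or.inr (Or.inr (Or.inr (Or.inr ⟨h1, h2, h3, h4, ?_⟩)))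
      by_contra hne
      have hin : 1 ≤ i ∧ i ≤ n := by
        by_contra hc
        exact hne (hy.1 i (by omega))
      obtain ⟨hi1, hi2⟩ := hin
      obtain ⟨hO, hBc, hIc, hEc, hJ⟩ := hy
      cases hcase : y i with
      | I =>
        obtain ⟨s, e, a1, a2, a3, a4, a5, a6, a7⟩ := hIc i hi1 hi2 (by rw [hcase]; rfl)
        obtain ⟨ε, j, k, hg⟩ := exists_of_sub_B a5
        refine h4 ⟨⟨s, e, s + j, s + k, ε⟩, (hmem _).2 ?_, a2, a3⟩
        exact Or.inr ⟨by simpa using (by omega : s < e), by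
          simp only []; rw [hg]; congr 1 <;> ring, a6, a7⟩
      | O => exact hne hcase
      | E =>
        obtain ⟨s, a1, a2, a3, a4⟩ := hEc i hi1 hi2 (by rw [hcase]; rfl)
        obtain ⟨ε, j, k, hg⟩ := exists_of_sub_B a3
        refine h3 ⟨⟨s, i, s + j, s + k, ε⟩, (hmem _).2 ?_, rfl, a2⟩
        exact Or.inr ⟨a2, by
          simp only []; rw [hg]; congr 1 <;> ring, by rw [hcase]; rfl, a4⟩
      | B ε j k =>
        obtain ⟨e, a1, a2, a3, a4⟩ := hBc i hi1 hi2 (by rw [hcase]; rfl)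
        refine h2 ⟨⟨i, e, i + j, i + k, ε⟩, (hmem _).2 ?_, rfl, a1⟩
        exact Or.inr ⟨a1, by
          simp only []; rw [hcase]; congr 1 <;> ring, a3, a4⟩
      | S ε j k =>
        refine h1 ⟨⟨i, i, i + j, i + k, ε⟩, (hmem _).2 ?_, rfl, rfl⟩
        exact Or.inl ⟨rfl, by
          simp only []; rw [hcase]; congr 1 <;> ring⟩
    refine ⟨⟨C, hC⟩, Subtype.ext (funext fun i => ?_)⟩
    exact encodesAt_unique_s3 hC (encodes_encode C i) (hEy i)
end

section
/- Fix a sentence length n ≥ 1. The decoding procedure is a two-sided inverse of the encoding procedure: (a) for every valid combination C of aspect sentiment triplets over a sentence of length n, decoding the encoding of C recovers C exactly; and (b) for every valid tag sequence y of length n, encoding the decoding of y recovers y exactly. Here decoding maps a valid tag sequence to the set containing, for each maximal BIOES target segment with boundaries (s,e) whose initial tag at position s is B^ε_{j,k} (if s < e) or S^ε_{j,k} (if s = e), the triplet with target span (s,e), opinion span (s+j, s+k), and sentiment ε. -/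
lemma Triplet.ext'_s6 {t₁ t₂ : Triplet} (h1 : t₁.ts = t₂.ts) (h2 : t₁.te = t₂.te)
    (h3 : t₁.os = t₂.os) (h4 : t₁.oe = t₂.oe) (h5 : t₁.sent = t₂.sent) : t₁ = t₂ := by
  cases t₁; cases t₂; simp_all

lemma cover_eq {n : ℤ} {C : Finset Triplet} (hC : ValidCombination n C)
    {t₁ t₂ : Triplet} (h1 : t₁ ∈ C) (h2 : t₂ ∈ C) {p : ℤ}
    (hp1 : t₁.ts ≤ p) (hp1' : p ≤ t₁.te) (hp2 : t₂.ts ≤ p) (hp2' : p ≤ t₂.te) :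
    t₁ = t₂ := by
  by_contra h
  rcases hC.2 t₁ h1 t₂ h2 h with h' | h' <;> omega

section
variable {n : ℤ} {C : Finset Triplet} {y : ℤ → Tag} {t : Triplet}
  (hC : ValidCombination n C) (hy : Encodes C y) (ht : t ∈ C)

include hC hy ht

lemma enc_S_s6 (h : t.ts = t.te) : y t.ts = Tag.S t.sent (t.os - t.ts) (t.oe - t.ts) := by
  rcases hy t.ts with ⟨t', ht', h1, h2, h3⟩ | ⟨t', ht', h1, h2, h3⟩ | ⟨t', ht', h1, h2, h3⟩ |
    ⟨t', ht', h1, h2, h3⟩ | ⟨h1, h2, h3, h4, h5⟩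
  · have := cover_eq (p := t.ts) hC ht' ht (by omega) (by omega) le_rfl (by omega)
    subst this; exact h3
  · have := cover_eq (p := t.ts) hC ht' ht (by omega) (by omega) le_rfl (by omega)
    subst this; omega
  · have := cover_eq (p := t.ts) hC ht' ht (by omega) (by omega) le_rfl (by omega)
    subst this; omega
  · have := cover_eq (p := t.ts) hC ht' ht (by omega) (by omega) le_rfl (by omega)
    subst this; omega
  · exact absurd ⟨t, ht, rfl, h.symm⟩ h1

lemma enc_B_s6 (h : t.ts < t.te) : y t.ts = Tag.B t.sent (t.os - t.ts) (t.oe - t.ts) := by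
  rcases hy t.ts with ⟨t', ht', h1, h2, h3⟩ | ⟨t', ht', h1, h2, h3⟩ | ⟨t', ht', h1, h2, h3⟩ |
    ⟨t', ht', h1, h2, h3⟩ | ⟨h1, h2, h3, h4, h5⟩
  · have := cover_eq (p := t.ts) hC ht' ht (by omega) (by omega) le_rfl (by omega)
    subst this; omega
  · have := cover_eq (p := t.ts) hC ht' ht (by omega) (by omega) le_rfl (by omega)
    subst this; exact h3
  · have := cover_eq (p := t.ts) hC ht' ht (by omega) (by omega) le_rfl (by omega)
    subst this; omega
  · have := cover_eq (p := t.ts) hC ht' ht (by omega) (by omega) le_rfl (by omega)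
    subst this; omega
  · exact absurd ⟨t, ht, rfl, h⟩ h2

lemma enc_E_s6 (h : t.ts < t.te) : y t.te = Tag.E := by
  rcases hy t.te with ⟨t', ht', h1, h2, h3⟩ | ⟨t', ht', h1, h2, h3⟩ | ⟨t', ht', h1, h2, h3⟩ |
    ⟨t', ht', h1, h2, h3⟩ | ⟨h1, h2, h3, h4, h5⟩
  · have := cover_eq (p := t.te) hC ht' ht (by omega) (by omega) (by omega) le_rfl
    subst this; omega
  · have := cover_eq (p := t.te) hC ht' ht (by omega) (by omega) (by omega) le_rfl
    subst this; omega
  · exact h3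
  · have := cover_eq (p := t.te) hC ht' ht (by omega) (by omega) (by omega) le_rfl
    subst this; omega
  · exact absurd ⟨t, ht, rfl, h⟩ h3

lemma enc_I_s6 {m : ℤ} (h1 : t.ts < m) (h2 : m < t.te) : y m = Tag.I := by
  rcases hy m with ⟨t', ht', ha, hb, hc⟩ | ⟨t', ht', ha, hb, hc⟩ | ⟨t', ht', ha, hb, hc⟩ |
    ⟨t', ht', ha, hb, hc⟩ | ⟨ha, hb, hc, hd, he⟩
  · have := cover_eq (p := m) hC ht' ht (by omega) (by omega) (by omega) (by omega)
    subst this; omega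
  · have := cover_eq (p := m) hC ht' ht (by omega) (by omega) (by omega) (by omega)
    subst this; omega
  · have := cover_eq (p := m) hC ht' ht (by omega) (by omega) (by omega) (by omega)
    subst this; omega
  · exact hc
  · exact absurd ⟨t, ht, h1, h2⟩ hd

end

/-- For a sentence length `n ≥ 1`, the decoding procedure is a
two-sided inverse of the encoding procedure:
(a) for every valid combination `C` of triplets, decoding the encoding of `C`
recovers `C` exactly; and
(b) for every valid tag sequence `y`, encoding the decoding of `y` recovers `y`
exactly. -/
theorem decode_two_sided_inverse_of_encode (n : ℤ) (hn : 1 ≤ n) :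
    (∀ C : Finset Triplet, ValidCombination n C →
       ∀ y : ℤ → Tag, Encodes C y → DecodesTo y C) ∧
    (∀ y : ℤ → Tag, ValidTagSeq n y →
       ∀ C : Finset Triplet, DecodesTo y C → Encodes C y) := by
  constructor
  · -- (a) decode ∘ encode = id
    intro C hC y hy t
    constructor
    · -- t ∈ C → DecodedTriplet y t
      intro ht
      by_cases h : t.ts = t.te
      · exact Or.inl ⟨h, enc_S_s6 hC hy ht h⟩
      · have hlt : t.ts < t.te := lt_of_le_of_ne (hC.1 t ht).2.1 h
        refine Or.inr ⟨hlt, enc_B_s6 hC hy ht hlt, ?_, ?_⟩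
        · rw [enc_E_s6 hC hy ht hlt]; rfl
        · intro m h1 h2; rw [enc_I_s6 hC hy ht h1 h2]; rfl
    · -- DecodedTriplet y t → t ∈ C
      rintro (⟨heq, hS⟩ | ⟨hlt, hB, hE, hI⟩)
      · rcases hy t.ts with ⟨t', ht', h1, h2, h3⟩ | ⟨t', ht', h1, h2, h3⟩ |
          ⟨t', ht', h1, h2, h3⟩ | ⟨t', ht', h1, h2, h3⟩ | ⟨h1, h2, h3, h4, h5⟩
        · rw [hS, Tag.S.injEq] at h3
          have : t = t' := Triplet.ext'_s6 (by omega) (by omega) (by omega) (by omega) h3.1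
          rw [this]; exact ht'
        · rw [hS] at h3; exact absurd h3 (by simp)
        · rw [hS] at h3; exact absurd h3 (by simp)
        · rw [hS] at h3; exact absurd h3 (by simp)
        · rw [hS] at h5; exact absurd h5 (by simp)
      · rcases hy t.ts with ⟨t', ht', h1, h2, h3⟩ | ⟨t', ht', h1, h2, h3⟩ |
          ⟨t', ht', h1, h2, h3⟩ | ⟨t', ht', h1, h2, h3⟩ | ⟨h1, h2, h3, h4, h5⟩
        · rw [hB] at h3; exact absurd h3 (by simp)
        · rw [hB, Tag.B.injEq] at h3
          -- show t.te = t'.te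
          have hte : t.te = t'.te := by
            by_contra hne
            rcases lt_or_gt_of_ne hne with hlt2 | hlt2
            · have := enc_I_s6 hC hy ht' (m := t.te) (by omega) hlt2
              rw [this] at hE; exact absurd hE (by simp [Tag.sub])
            · have h1' := enc_E_s6 hC hy ht' (by omega)
              have h2' := hI t'.te (by omega) hlt2
              rw [h1'] at h2'; exact absurd h2' (by simp [Tag.sub])
          have : t = t' := Triplet.ext'_s6 (by omega) hte (by omega) (by omega) h3.1
          rw [this]; exact ht'
        · rw [hB] at h3; exact absurd h3 (by simp)
        · rw [hB] at h3; exact absurd h3 (by simp)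
        · rw [hB] at h5; exact absurd h5 (by simp)
  · -- (b) encode ∘ decode = id
    intro y hv C hd i
    obtain ⟨hO, hBseg, hIseg, hEseg, hOff⟩ := hv
    have hrange : ∀ g, y i = g → g ≠ Tag.O → 1 ≤ i ∧ i ≤ n := by
      intro g hg hne
      by_contra hc
      push_neg at hc
      have : y i = Tag.O := hO i (by omega)
      exact hne (hg ▸ this)
    rcases hyi : y i with _ | _ | _ | ⟨ε, j, k⟩ | ⟨ε, j, k⟩
    · -- y i = I
      obtain ⟨hi1, hi2⟩ := hrange _ hyi (by simp)
      obtain ⟨s, e, hs1, hs2, hs3, hs4, hsB, hsE, hsI⟩ :=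
        hIseg i hi1 hi2 (by rw [hyi]; rfl)
      rcases hb : y s with _ | _ | _ | ⟨ε, j, k⟩ | ⟨ε, j, k⟩ <;> rw [hb] at hsB <;>
        simp [Tag.sub] at hsB
      set t : Triplet := ⟨s, e, s + j, s + k, ε⟩ with htdef
      have htC : t ∈ C := by
        refine (hd t).2 (Or.inr ⟨hs3.trans' hs2, ?_, hsE, hsI⟩)
        show y s = Tag.B ε (s + j - s) (s + k - s)
        rw [hb]; congr 1 <;> ring
      exact Or.inr (Or.inr (Or.inr (Or.inl ⟨t, htC, hs2, hs3, rfl⟩)))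
    · -- y i = O
      refine Or.inr (Or.inr (Or.inr (Or.inr ⟨?_, ?_, ?_, ?_, rfl⟩)))
      · rintro ⟨t, htC, h1, h2⟩
        rcases (hd t).1 htC with ⟨ha, hb⟩ | ⟨ha, hb, hc, hdd⟩
        · rw [h1, hyi] at hb; exact absurd hb (by simp)
        · omega
      · rintro ⟨t, htC, h1, h2⟩
        rcases (hd t).1 htC with ⟨ha, hb⟩ | ⟨ha, hb, hc, hdd⟩
        · omega
        · rw [h1, hyi] at hb; exact absurd hb (by simp)
      · rintro ⟨t, htC, h1, h2⟩
        rcases (hd t).1 htC with ⟨ha, hb⟩ | ⟨ha, hb, hc, hdd⟩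
        · omega
        · rw [h1, hyi] at hc; exact absurd hc (by simp [Tag.sub])
      · rintro ⟨t, htC, h1, h2⟩
        rcases (hd t).1 htC with ⟨ha, hb⟩ | ⟨ha, hb, hc, hdd⟩
        · omega
        · have := hdd i h1 h2; rw [hyi] at this
          exact absurd this (by simp [Tag.sub])
    · -- y i = E
      obtain ⟨hi1, hi2⟩ := hrange _ hyi (by simp)
      obtain ⟨s, hs1, hs2, hsB, hsI⟩ := hEseg i hi1 hi2 (by rw [hyi]; rfl)
      rcases hb : y s with _ | _ | _ | ⟨ε, j, k⟩ | ⟨ε, j, k⟩ <;> rw [hb] at hsB <;>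
        simp [Tag.sub] at hsB
      set t : Triplet := ⟨s, i, s + j, s + k, ε⟩ with htdef
      have htC : t ∈ C := by
        refine (hd t).2 (Or.inr ⟨hs2, ?_, by rw [hyi]; rfl, hsI⟩)
        show y s = Tag.B ε (s + j - s) (s + k - s)
        rw [hb]; congr 1 <;> ring
      exact Or.inr (Or.inr (Or.inl ⟨t, htC, rfl, hs2, rfl⟩))
    · -- y i = B ε j k
      obtain ⟨hi1, hi2⟩ := hrange _ hyi (by simp)
      obtain ⟨e, he1, he2, heE, heI⟩ := hBseg i hi1 hi2 (by rw [hyi]; rfl)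
      set t : Triplet := ⟨i, e, i + j, i + k, ε⟩ with htdef
      have htC : t ∈ C := by
        refine (hd t).2 (Or.inr ⟨he1, ?_, heE, heI⟩)
        show y i = Tag.B ε (i + j - i) (i + k - i)
        rw [hyi]; congr 1 <;> ring
      refine Or.inr (Or.inl ⟨t, htC, rfl, he1, ?_⟩)
      show Tag.B ε j k = Tag.B ε (i + j - i) (i + k - i)
      congr 1 <;> ring
    · -- y i = S ε j k
      obtain ⟨hi1, hi2⟩ := hrange _ hyi (by simp)
      set t : Triplet := ⟨i, i, i + j, i + k, ε⟩ with htdef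
      have htC : t ∈ C := by
        refine (hd t).2 (Or.inl ⟨rfl, ?_⟩)
        show y i = Tag.S ε (i + j - i) (i + k - i)
        rw [hyi]; congr 1 <;> ring
      refine Or.inl ⟨t, htC, rfl, rfl, ?_⟩
      show Tag.S ε j k = Tag.S ε (i + j - i) (i + k - i)
      congr 1 <;> ring
end
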